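/- Let Ω ⊂ ℝ^N be bounded, ρ₁, ρ₂ ∈ X_Ω* with ρ₂ ≤ ρ₁ (i.e., ⟨ρ₂,v⟩ ≤ ⟨ρ₁,v⟩ for all v ≥ 0 in X_Ω), let φ₁, φ₂ : ∂Ω → ℝ be bounded, and let u₁ minimize I_{ρ₁} over C(φ₁,Ω) and u₂ minimize I_{ρ₂} over C(φ₂,Ω). Then u₂(x) ≤ u₁(x) + sup_{∂Ω}(φ₂ - φ₁) for all x ∈ Ω. -/

import Mathlib

/-!
Write `c` for a level with `u₂ - u₁ ≤ c` on `∂Ω` whose contact set `{u₂ - u₁ = c}` is null; all but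
countably many `c > sup (φ₂ - φ₁)` qualify. The truncations `max (u₂ - c) u₁` and
`min (u₂ - c) u₁ + c` are admissible for the two problems and merely exchange the gradients of `u₁`
and `u₂`, so the gradient parts of their energies add up to those of `u₁` and `u₂`. Together with
`ρ₂ ≤ ρ₁` this turns all minimality inequalities into equalities, and testing `u₂` against its
midpoint with the second truncation gives equality in the strict convexity of `1 - √(1 - ‖p‖²)`.
Hence the excess `(u₂ - u₁ - c)⁺` has zero gradient a.e. in `Ω`; being Lipschitz, it is constant on
the connected set `Ω` (as one sees by mollifying), and it vanishes on `∂Ω`.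
-/

open MeasureTheory Set

/-- The Born-Infeld energy on a bounded domain with source `ρ`. -/
noncomputable def BIenergy (N : ℕ) (Ω : Set (EuclideanSpace ℝ (Fin N)))
    (ρ : (EuclideanSpace ℝ (Fin N) → ℝ) →ₗ[ℝ] ℝ)
    (u : EuclideanSpace ℝ (Fin N) → ℝ) : ℝ :=
  (∫ x in Ω, (1 - Real.sqrt (1 - ‖fderiv ℝ u x‖ ^ 2))) - ρ u

/-- The admissible class `C(φ,Ω)`. -/
def Admissible (N : ℕ) (Ω : Set (EuclideanSpace ℝ (Fin N)))
    (φ : EuclideanSpace ℝ (Fin N) → ℝ) (u : EuclideanSpace ℝ (Fin N) → ℝ) : Prop :=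
  LipschitzOnWith 1 u (closure Ω) ∧ EqOn u φ (frontier Ω)

open Metric Filter Topology Convolution ContinuousLinearMap

noncomputable def BIdensity {F : Type*} [Norm F] (a : F) : ℝ := 1 - √(1 - ‖a‖ ^ 2)

section Density

variable {F : Type*}

theorem abs_BIdensity_le_one [Norm F] (a : F) : |BIdensity a| ≤ 1 := by
  have h : √(1 - ‖a‖ ^ 2) ≤ 1 := Real.sqrt_le_one.2 (by nlinarith [sq_nonneg ‖a‖])
  rw [BIdensity, abs_le]
  constructor <;> linarith [Real.sqrt_nonneg (1 - ‖a‖ ^ 2)]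

theorem continuous_BIdensity [SeminormedAddCommGroup F] : Continuous (BIdensity : F → ℝ) := by
  unfold BIdensity; fun_prop

theorem BIdensity_midpoint_add_le [NormedAddCommGroup F] [InnerProductSpace ℝ F] {a b : F}
    (ha : ‖a‖ ≤ 1) (hb : ‖b‖ ≤ 1) :
    BIdensity ((2⁻¹ : ℝ) • (a + b)) + ‖a - b‖ ^ 2 / 8 ≤ (BIdensity a + BIdensity b) / 2 := by
  have hpar := parallelogram_law_with_norm ℝ a b
  have hmid : ‖(2⁻¹ : ℝ) • (a + b)‖ ^ 2 = ‖a + b‖ ^ 2 / 4 := by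
    rw [norm_smul, mul_pow]; norm_num; ring
  have hab : ‖a + b‖ ≤ 2 := (norm_add_le a b).trans (by linarith)
  set s := √(1 - ‖a‖ ^ 2)
  set t := √(1 - ‖b‖ ^ 2)
  set m := √(1 - ‖a + b‖ ^ 2 / 4)
  have hs : s ^ 2 = 1 - ‖a‖ ^ 2 := Real.sq_sqrt (by nlinarith [norm_nonneg a])
  have ht : t ^ 2 = 1 - ‖b‖ ^ 2 := Real.sq_sqrt (by nlinarith [norm_nonneg b])
  have hm : m ^ 2 = 1 - ‖a + b‖ ^ 2 / 4 := Real.sq_sqrt (by nlinarith [norm_nonneg (a + b)])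
  have hs1 : s ≤ 1 := Real.sqrt_le_one.2 (by nlinarith [norm_nonneg a])
  have ht1 : t ≤ 1 := Real.sqrt_le_one.2 (by nlinarith [norm_nonneg b])
  have hm1 : m ≤ 1 := Real.sqrt_le_one.2 (by nlinarith [norm_nonneg (a + b)])
  have hs0 := Real.sqrt_nonneg (1 - ‖a‖ ^ 2)
  have ht0 := Real.sqrt_nonneg (1 - ‖b‖ ^ 2)
  have hm0 := Real.sqrt_nonneg (1 - ‖a + b‖ ^ 2 / 4)
  have hsq : ((s + t) / 2) ^ 2 + ‖a - b‖ ^ 2 / 4 ≤ m ^ 2 := by nlinarith [sq_nonneg (s - t)]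
  have hle : (s + t) / 2 ≤ m := by nlinarith
  -- `m ^ 2 - p ^ 2 = (m - p) (m + p) ≤ 2 (m - p)` for `p = (s + t) / 2`
  have hfac : (m - (s + t) / 2) * (m + (s + t) / 2) ≤ (m - (s + t) / 2) * 2 :=
    mul_le_mul_of_nonneg_left (by linarith) (by linarith)
  rw [BIdensity, BIdensity, BIdensity, hmid]
  nlinarith

theorem BIdensity_midpoint_add_le_dual [NormedAddCommGroup F] [InnerProductSpace ℝ F]
    [CompleteSpace F] {A B : F →L[ℝ] ℝ} (hA : ‖A‖ ≤ 1) (hB : ‖B‖ ≤ 1) :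
    BIdensity ((2⁻¹ : ℝ) • (A + B)) + ‖A - B‖ ^ 2 / 8 ≤ (BIdensity A + BIdensity B) / 2 := by
  set T := (InnerProductSpace.toDual ℝ F).symm
  have key := BIdensity_midpoint_add_le (a := T A) (b := T B) (by simpa using hA)
    (by simpa using hB)
  simpa only [BIdensity, ← map_add, ← map_sub, ← map_smul, LinearIsometryEquiv.norm_map] using key

end Density

theorem exists_mem_Ioo_measure_level_set_eq_zero {α : Type*} [MeasurableSpace α] {μ : Measure α}
    [SFinite μ] {f : α → ℝ} (hf : NullMeasurable f μ) {a b : ℝ} (hab : a < b) :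
    ∃ t ∈ Ioo a b, μ {x | f x = t} = 0 := by
  obtain ⟨t, ht, hat⟩ :=
    ((Measure.countable_meas_level_set_pos₀ hf).dense_compl ℝ).exists_between hab
  exact ⟨t, hat, by simpa using ht⟩

theorem ae_eq_of_average_integral_BIdensity_le_midpoint {α : Type*} [MeasurableSpace α]
    {μ : Measure α} {F : Type*} [NormedAddCommGroup F] [InnerProductSpace ℝ F] [CompleteSpace F]
    {A B M : α → F →L[ℝ] ℝ} (hA : ∀ᵐ x ∂μ, ‖A x‖ ≤ 1) (hB : ∀ᵐ x ∂μ, ‖B x‖ ≤ 1)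
    (hM : ∀ᵐ x ∂μ, M x = (2⁻¹ : ℝ) • (A x + B x))
    (hiA : Integrable (fun x => BIdensity (A x)) μ) (hiB : Integrable (fun x => BIdensity (B x)) μ)
    (hiM : Integrable (fun x => BIdensity (M x)) μ)
    (h : (∫ x, BIdensity (A x) ∂μ + ∫ x, BIdensity (B x) ∂μ) / 2 ≤ ∫ x, BIdensity (M x) ∂μ) :
    A =ᵐ[μ] B := by
  set D := fun x => (BIdensity (A x) + BIdensity (B x)) / 2 - BIdensity (M x)
  have hD : ∀ᵐ x ∂μ, ‖A x - B x‖ ^ 2 / 8 ≤ D x := by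
    filter_upwards [hA, hB, hM] with x ha hb hm
    have := BIdensity_midpoint_add_le_dual ha hb
    rw [← hm] at this
    simp only [D]
    linarith
  have hD0 : 0 ≤ᵐ[μ] D := by
    filter_upwards [hD] with x hx using le_trans (by positivity) hx
  have hiAB : Integrable (fun x => (BIdensity (A x) + BIdensity (B x)) / 2) μ :=
    (hiA.add hiB).div_const 2
  have hintD : ∫ x, D x ∂μ = (∫ x, BIdensity (A x) ∂μ + ∫ x, BIdensity (B x) ∂μ) / 2 -
      ∫ x, BIdensity (M x) ∂μ := by
    rw [integral_sub hiAB hiM, integral_div, integral_add hiA hiB]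
  have hDzero : D =ᵐ[μ] 0 := (integral_eq_zero_iff_of_nonneg_ae hD0 (hiAB.sub hiM)).1
    (le_antisymm (by linarith) (integral_nonneg_of_ae hD0))
  filter_upwards [hD, hDzero] with x hx hx0
  have : ‖A x - B x‖ ^ 2 ≤ 0 := by simp only [hx0, Pi.zero_apply] at hx; linarith
  exact sub_eq_zero.1 <| norm_eq_zero.1 <|
    (pow_eq_zero_iff two_ne_zero).1 (le_antisymm this (by positivity))

section Derivatives

variable {E : Type*} [NormedAddCommGroup E] [NormedSpace ℝ E]

theorem integrableOn_BIdensity_fderiv [MeasurableSpace E] [OpensMeasurableSpace E] {μ : Measure E}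
    {Ω : Set E} (hΩ : μ Ω ≠ ⊤) (u : E → ℝ) :
    IntegrableOn (fun x => BIdensity (fderiv ℝ u x)) Ω μ :=
  Measure.integrableOn_of_bounded hΩ
    (continuous_BIdensity.measurable.comp (measurable_fderiv ℝ u)).aestronglyMeasurable
    (ae_of_all _ fun _ => abs_BIdensity_le_one _)

theorem fderiv_max_of_lt {f g : E → ℝ} {x : E} (hf : ContinuousAt f x) (hg : ContinuousAt g x)
    (h : f x < g x) : fderiv ℝ (fun y => max (f y) (g y)) x = fderiv ℝ g x :=
  Filter.EventuallyEq.fderiv_eq <| (hf.eventually_lt hg h).mono fun _ hy => max_eq_right hy.le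

theorem fderiv_min_of_lt {f g : E → ℝ} {x : E} (hf : ContinuousAt f x) (hg : ContinuousAt g x)
    (h : f x < g x) : fderiv ℝ (fun y => min (f y) (g y)) x = fderiv ℝ f x :=
  Filter.EventuallyEq.fderiv_eq <| (hf.eventually_lt hg h).mono fun _ hy => min_eq_left hy.le

/-- Off the contact set `{f = g}` the gradients of `max f g` and `min f g` are those of `f` and `g`,
possibly swapped. -/
theorem setIntegral_BIdensity_fderiv_max_add_min [MeasurableSpace E] [OpensMeasurableSpace E]
    {μ : Measure E} {Ω : Set E} (hΩ : IsOpen Ω) (hΩμ : μ Ω ≠ ⊤) {f g : E → ℝ}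
    (hf : ContinuousOn f Ω) (hg : ContinuousOn g Ω) (hfg : μ.restrict Ω {x | f x = g x} = 0) :
    ∫ x in Ω, BIdensity (fderiv ℝ (fun y => max (f y) (g y)) x) ∂μ +
        ∫ x in Ω, BIdensity (fderiv ℝ (fun y => min (f y) (g y)) x) ∂μ =
      ∫ x in Ω, BIdensity (fderiv ℝ f x) ∂μ + ∫ x in Ω, BIdensity (fderiv ℝ g x) ∂μ := by
  simp only [← integral_add (integrableOn_BIdensity_fderiv hΩμ _)
    (integrableOn_BIdensity_fderiv hΩμ _)]
  refine integral_congr_ae ?_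
  filter_upwards [ae_restrict_mem hΩ.measurableSet, measure_eq_zero_iff_ae_notMem.1 hfg]
    with x hx hne
  have hfx := hf.continuousAt (hΩ.mem_nhds hx)
  have hgx := hg.continuousAt (hΩ.mem_nhds hx)
  rcases lt_or_gt_of_ne hne with hlt | hlt
  · rw [fderiv_max_of_lt hfx hgx hlt, fderiv_min_of_lt hfx hgx hlt, add_comm]
  · rw [show (fun y => max (f y) (g y)) = fun y => max (g y) (f y) from
        funext fun _ => max_comm _ _,
      show (fun y => min (f y) (g y)) = fun y => min (g y) (f y) from
        funext fun _ => min_comm _ _,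
      fderiv_max_of_lt hgx hfx hlt, fderiv_min_of_lt hgx hfx hlt]

end Derivatives

section FiniteDimensional

variable {E : Type*} [NormedAddCommGroup E] [NormedSpace ℝ E] [FiniteDimensional ℝ E]
  [MeasurableSpace E] [BorelSpace E] {μ : Measure E} [μ.IsAddHaarMeasure] {K : NNReal} {f : E → ℝ}

theorem LipschitzOnWith.ae_differentiableAt_of_isOpen {U : Set E} (hf : LipschitzOnWith K f U)
    (hU : IsOpen U) : ∀ᵐ x ∂μ, x ∈ U → DifferentiableAt ℝ f x := by
  filter_upwards [hf.ae_differentiableWithinAt_of_mem] with x hx hxU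
  exact (hx hxU).differentiableAt (hU.mem_nhds hxU)

/-- Integration by parts moves the derivative from the mollifier onto `f`. -/
theorem LipschitzWith.hasFDerivAt_normed_convolution_eq_zero (hf : LipschitzWith K f)
    (φ : ContDiffBump (0 : E)) {y : E} (hd : ∀ᵐ t ∂μ, t ∈ ball y φ.rOut → fderiv ℝ f t = 0) :
    HasFDerivAt (φ.normed μ ⋆[lsmul ℝ ℝ, μ] f : E → ℝ) (0 : E →L[ℝ] ℝ) y := by
  set ψ := φ.normed μ
  have hψ : ContDiff ℝ 1 ψ := φ.contDiff_normed
  rw [← flip_flip (lsmul ℝ ℝ), convolution_flip]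
  refine (φ.hasCompactSupport_normed.hasFDerivAt_convolution_right _
    hf.continuous.locallyIntegrable hψ y).congr_fderiv ?_
  ext v
  rw [convolution_precompR_apply _ hf.continuous.locallyIntegrable
    (φ.hasCompactSupport_normed.fderiv ℝ) (hψ.continuous_fderiv one_ne_zero), convolution_def,
    zero_apply]
  set g : E → ℝ := fun t => ψ (y - t)
  have hg : ∀ t, HasFDerivAt g ((fderiv ℝ ψ (y - t)).comp (-ContinuousLinearMap.id ℝ E)) t :=
    fun t => ((hψ.differentiable one_ne_zero) (y - t)).hasFDerivAt.comp t
      ((hasFDerivAt_id t).const_sub y)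
  obtain ⟨C, hC⟩ :=
    ContDiff.lipschitzWith_of_hasCompactSupport φ.hasCompactSupport_normed hψ one_ne_zero
  have hparts := hf.integral_lineDeriv_mul_eq (μ := μ)
    (hC.comp (IsometryEquiv.subLeft y).isometry.lipschitz)
    (φ.hasCompactSupport_normed.comp_homeomorph (Homeomorph.subLeft y)) v
  have hline : ∀ t, lineDeriv ℝ g t (-v) = fderiv ℝ ψ (y - t) v := fun t => by
    simp [((hg t).hasLineDerivAt (-v)).lineDeriv]
  change ∫ t, lineDeriv ℝ f t v * g t ∂μ = ∫ t, lineDeriv ℝ g t (-v) * f t ∂μ at hparts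
  simp only [flip_apply, lsmul_apply, smul_eq_mul]
  change ∫ t, fderiv ℝ ψ (y - t) v * f t ∂μ = 0
  simp only [← hline, ← hparts]
  refine integral_eq_zero_of_ae ?_
  filter_upwards [hf.ae_differentiableAt, hd] with t hft hdt
  by_cases hgt : g t = 0
  · simp [hgt]
  · have ht : t ∈ ball y φ.rOut := by
      have : y - t ∈ Function.support ψ := hgt
      rwa [φ.support_normed_eq, mem_ball_zero_iff, ← dist_eq_norm, dist_comm] at this
    simp [hft.lineDeriv_eq_fderiv, hdt ht]

theorem LipschitzWith.eq_of_ae_fderiv_eq_zero_on_ball (hf : LipschitzWith K f) {z x : E} {r : ℝ}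
    (hd : ∀ᵐ t ∂μ, t ∈ ball z (2 * r) → fderiv ℝ f t = 0) (hx : x ∈ ball z r) : f x = f z := by
  refine eq_of_forall_dist_le fun ε hε => ?_
  obtain ⟨δ, hδ, hfδ⟩ := Metric.uniformContinuous_iff.1 hf.uniformContinuous (ε / 2) (half_pos hε)
  have hr : 0 < r := pos_of_mem_ball hx
  set R := min δ r
  have hR : 0 < R := lt_min hδ hr
  let φ : ContDiffBump (0 : E) := ⟨R / 2, R, half_pos hR, half_lt_self hR⟩
  set F := (φ.normed μ ⋆[lsmul ℝ ℝ, μ] f : E → ℝ)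
  have hF : ∀ y ∈ ball z r, HasFDerivAt F (0 : E →L[ℝ] ℝ) y := fun y hy =>
    hf.hasFDerivAt_normed_convolution_eq_zero φ <| hd.mono fun t ht htR => ht <| by
      have : R ≤ r := min_le_right _ _
      rw [mem_ball] at hy htR ⊢
      linarith [dist_triangle t y z]
  have hFxz : F x = F z := isOpen_ball.is_const_of_fderiv_eq_zero (convex_ball z r).isPreconnected
    (fun y hy => (hF y hy).differentiableAt.differentiableWithinAt)
    (fun y hy => (hF y hy).fderiv) hx (mem_ball_self hr)
  have happrox : ∀ y, dist (F y) (f y) ≤ ε / 2 := fun y =>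
    φ.dist_normed_convolution_le hf.continuous.aestronglyMeasurable fun t ht =>
      (hfδ (lt_of_lt_of_le ht (min_le_left _ _))).le
  calc dist (f x) (f z) ≤ dist (f x) (F x) + dist (F x) (f z) := dist_triangle _ _ _
    _ ≤ ε := by linarith [dist_comm (f x) (F x), happrox x, hFxz ▸ happrox z]

theorem LipschitzOnWith.apply_eq_of_ae_fderiv_eq_zero {U : Set E} (hf : LipschitzOnWith K f U)
    (hU : IsOpen U) (hU' : IsPreconnected U) (hd : ∀ᵐ x ∂μ, x ∈ U → fderiv ℝ f x = 0) {x y : E}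
    (hx : x ∈ U) (hy : y ∈ U) : f x = f y := by
  obtain ⟨F, hF, hfF⟩ := hf.extend_real
  have hdF : ∀ᵐ x ∂μ, x ∈ U → fderiv ℝ F x = 0 := by
    filter_upwards [hd] with x hx hxU
    rw [← hx hxU, (hfF.eventuallyEq_of_mem (hU.mem_nhds hxU)).fderiv_eq]
  have hloc : IsLocallyConstant fun w : U => F w := by
    rw [IsLocallyConstant.iff_eventually_eq]
    rintro ⟨z, hz⟩
    obtain ⟨r, hr, hrU⟩ := Metric.isOpen_iff.1 hU z hz
    have hball : ∀ᶠ w in 𝓝 z, F w = F z := eventually_of_mem (ball_mem_nhds z (half_pos hr))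
      fun w hw => hF.eq_of_ae_fderiv_eq_zero_on_ball
        (hdF.mono fun t ht ht' => ht (hrU (by rwa [mul_div_cancel₀ _ two_ne_zero] at ht'))) hw
    exact (continuous_subtype_val.tendsto (⟨z, hz⟩ : U)).eventually hball
  have := isPreconnected_iff_preconnectedSpace.1 hU'
  rw [hfF hx, hfF hy]
  exact hloc.apply_eq_of_preconnectedSpace ⟨x, hx⟩ ⟨y, hy⟩

end FiniteDimensional

theorem ae_fderiv_eq_of_average_setIntegral_BIdensity_le_midpoint {E : Type*}
    [NormedAddCommGroup E] [InnerProductSpace ℝ E] [FiniteDimensional ℝ E] [MeasurableSpace E]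
    [BorelSpace E] {μ : Measure E} [μ.IsAddHaarMeasure] {Ω : Set E} (hΩ : IsOpen Ω)
    (hΩμ : μ Ω ≠ ⊤) {u v : E → ℝ}
    (hu : LipschitzOnWith 1 u Ω) (hv : LipschitzOnWith 1 v Ω)
    (h : (∫ x in Ω, BIdensity (fderiv ℝ u x) ∂μ + ∫ x in Ω, BIdensity (fderiv ℝ v x) ∂μ) / 2 ≤
      ∫ x in Ω, BIdensity (fderiv ℝ ((2⁻¹ : ℝ) • (u + v)) x) ∂μ) :
    ∀ᵐ x ∂μ, x ∈ Ω → fderiv ℝ u x = fderiv ℝ v x := by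
  have hnorm : ∀ {w : E → ℝ}, LipschitzOnWith 1 w Ω → ∀ᵐ x ∂μ.restrict Ω, ‖fderiv ℝ w x‖ ≤ 1 :=
    fun hw => (ae_restrict_iff' hΩ.measurableSet).2 <| ae_of_all _ fun x hx => by
      simpa using norm_fderiv_le_of_lipschitzOn ℝ (hΩ.mem_nhds hx) hw
  have hmid : ∀ᵐ x ∂μ.restrict Ω, fderiv ℝ ((2⁻¹ : ℝ) • (u + v)) x =
      (2⁻¹ : ℝ) • (fderiv ℝ u x + fderiv ℝ v x) := by
    rw [ae_restrict_iff' hΩ.measurableSet]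
    filter_upwards [hu.ae_differentiableAt_of_isOpen hΩ, hv.ae_differentiableAt_of_isOpen hΩ]
      with x hux hvx hx
    rw [fderiv_const_smul ((hux hx).add (hvx hx)), fderiv_add (hux hx) (hvx hx)]
  rw [← ae_restrict_iff' hΩ.measurableSet]
  exact ae_eq_of_average_integral_BIdensity_le_midpoint (hnorm hu) (hnorm hv) hmid
    (integrableOn_BIdensity_fderiv hΩμ u) (integrableOn_BIdensity_fderiv hΩμ v)
    (integrableOn_BIdensity_fderiv hΩμ _) h

protected theorem LipschitzOnWith.max {α : Type*} [PseudoEMetricSpace α] {Kf Kg : NNReal}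
    {f g : α → ℝ} {s : Set α} (hf : LipschitzOnWith Kf f s) (hg : LipschitzOnWith Kg g s) :
    LipschitzOnWith (max Kf Kg) (fun x => max (f x) (g x)) s :=
  lipschitzOnWith_iff_restrict.2 (hf.to_restrict.max hg.to_restrict)

protected theorem LipschitzOnWith.min {α : Type*} [PseudoEMetricSpace α] {Kf Kg : NNReal}
    {f g : α → ℝ} {s : Set α} (hf : LipschitzOnWith Kf f s) (hg : LipschitzOnWith Kg g s) :
    LipschitzOnWith (max Kf Kg) (fun x => min (f x) (g x)) s :=
  lipschitzOnWith_iff_restrict.2 (hf.to_restrict.min hg.to_restrict)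

section Comparison

variable {N : ℕ} {Ω : Set (EuclideanSpace ℝ (Fin N))}
  {φ φ₁ φ₂ u v u₁ u₂ : EuclideanSpace ℝ (Fin N) → ℝ}
  {ρ₁ ρ₂ : (EuclideanSpace ℝ (Fin N) → ℝ) →ₗ[ℝ] ℝ} {c : ℝ}

theorem Admissible.midpoint (hu : Admissible N Ω φ u) (hv : Admissible N Ω φ v) :
    Admissible N Ω φ ((2⁻¹ : ℝ) • (u + v)) := by
  refine ⟨lipschitzOnWith_iff_restrict.2 ?_, fun y hy => ?_⟩
  · have hK : ‖(2⁻¹ : ℝ)‖₊ * (1 + 1) = 1 := by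
      rw [← NNReal.coe_inj]; norm_num
    have := (lipschitzWith_smul (2⁻¹ : ℝ)).comp (hu.1.to_restrict.add hv.1.to_restrict)
    rw [hK] at this
    exact this
  · simp only [Pi.smul_apply, Pi.add_apply, hu.2 hy, hv.2 hy, smul_eq_mul]
    ring

theorem Admissible.max_sub_const (h₁ : Admissible N Ω φ₁ u₁) (h₂ : Admissible N Ω φ₂ u₂)
    (hc : ∀ y ∈ frontier Ω, u₂ y - u₁ y ≤ c) :
    Admissible N Ω φ₁ fun y => max (u₂ y - c) (u₁ y) := by
  have hc' := (LipschitzWith.const c).lipschitzOnWith (s := closure Ω)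
  refine ⟨by simpa using (h₂.1.sub hc').max h₁.1, fun y hy => ?_⟩
  dsimp only
  rw [max_eq_right (by linarith [hc y hy]), h₁.2 hy]

theorem Admissible.min_sub_const_add (h₂ : Admissible N Ω φ₂ u₂) (h₁ : Admissible N Ω φ₁ u₁)
    (hc : ∀ y ∈ frontier Ω, u₂ y - u₁ y ≤ c) :
    Admissible N Ω φ₂ fun y => min (u₂ y - c) (u₁ y) + c := by
  have hc' := (LipschitzWith.const c).lipschitzOnWith (s := closure Ω)
  refine ⟨by simpa using ((h₂.1.sub hc').min h₁.1).add hc', fun y hy => ?_⟩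
  dsimp only
  rw [min_eq_left (by linarith [hc y hy]), sub_add_cancel, h₂.2 hy]

/-- The truncations `max (u₂ - c) u₁` and `min (u₂ - c) u₁ + c` exchange gradients off the null
contact set, so by `ρ₂ ≤ ρ₁` testing `u₁` and `u₂` against them costs nothing; testing `u₂` against
the midpoint with the second truncation then reverses the convexity inequality. -/
theorem average_setIntegral_BIdensity_le_midpoint (hΩ : IsOpen Ω) (hΩμ : volume Ω ≠ ⊤)
    (h₁ : Admissible N Ω φ₁ u₁) (h₂ : Admissible N Ω φ₂ u₂)
    (hmin₁ : ∀ v, Admissible N Ω φ₁ v → BIenergy N Ω ρ₁ u₁ ≤ BIenergy N Ω ρ₁ v)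
    (hmin₂ : ∀ v, Admissible N Ω φ₂ v → BIenergy N Ω ρ₂ u₂ ≤ BIenergy N Ω ρ₂ v)
    (hρ : ∀ v, (∀ x ∈ closure Ω, 0 ≤ v x) → ρ₂ v ≤ ρ₁ v)
    (hc : ∀ y ∈ frontier Ω, u₂ y - u₁ y ≤ c)
    (hnull : volume.restrict Ω {x | u₂ x - u₁ x = c} = 0) :
    ((∫ x in Ω, BIdensity (fderiv ℝ u₂ x)) +
        ∫ x in Ω, BIdensity (fderiv ℝ (fun y => min (u₂ y - c) (u₁ y) + c) x)) / 2 ≤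
      ∫ x in Ω, BIdensity (fderiv ℝ ((2⁻¹ : ℝ) • (u₂ + fun y => min (u₂ y - c) (u₁ y) + c)) x) := by
  set v₁ := fun y => max (u₂ y - c) (u₁ y)
  set v₂ := fun y => min (u₂ y - c) (u₁ y) + c
  set J := fun w : EuclideanSpace ℝ (Fin N) → ℝ => ∫ x in Ω, BIdensity (fderiv ℝ w x)
  have hJ : ∀ ρ w, BIenergy N Ω ρ w = J w - ρ w := fun _ _ => rfl
  have hlattice : J v₁ + J v₂ = J u₂ + J u₁ := by
    have hcont : ∀ {w : EuclideanSpace ℝ (Fin N) → ℝ},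
        LipschitzOnWith 1 w (closure Ω) → ContinuousOn w Ω :=
      fun hw => hw.continuousOn.mono subset_closure
    have hcontact : {x | u₂ x - c = u₁ x} = {x | u₂ x - u₁ x = c} := by
      ext x; simp only [mem_ofPred_eq]; constructor <;> intro h <;> linarith
    have := setIntegral_BIdensity_fderiv_max_add_min (f := fun y => u₂ y - c) hΩ hΩμ
      ((hcont h₂.1).sub continuousOn_const) (hcont h₁.1) (hcontact ▸ hnull)
    simpa only [J, v₁, v₂, fderiv_add_const, fderiv_sub_const] using this
  have hg : v₁ - u₁ = u₂ - v₂ := by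
    ext y
    simp only [Pi.sub_apply, v₁, v₂]
    linarith [min_add_max (u₂ y - c) (u₁ y)]
  have hρg : ρ₂ (u₂ - v₂) ≤ ρ₁ (v₁ - u₁) := by
    rw [← hg]; exact hρ _ fun x _ => sub_nonneg.2 (le_max_right _ _)
  have e₁ := hmin₁ v₁ (h₁.max_sub_const h₂ hc)
  have e₂ := hmin₂ v₂ (h₂.min_sub_const_add h₁ hc)
  have e₃ := hmin₂ ((2⁻¹ : ℝ) • (u₂ + v₂)) (h₂.midpoint (h₂.min_sub_const_add h₁ hc))
  rw [hJ, hJ] at e₁ e₂ e₃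
  rw [map_sub, map_sub] at hρg
  rw [map_smul, map_add, smul_eq_mul] at e₃
  show (J u₂ + J v₂) / 2 ≤ J ((2⁻¹ : ℝ) • (u₂ + v₂))
  linarith

theorem le_add_of_frontier_sub_le (hΩ : IsOpen Ω) (hΩconn : IsPreconnected Ω)
    (hΩμ : volume Ω ≠ ⊤) (hfr : (frontier Ω).Nonempty)
    (h₁ : Admissible N Ω φ₁ u₁) (h₂ : Admissible N Ω φ₂ u₂)
    (hmin₁ : ∀ v, Admissible N Ω φ₁ v → BIenergy N Ω ρ₁ u₁ ≤ BIenergy N Ω ρ₁ v)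
    (hmin₂ : ∀ v, Admissible N Ω φ₂ v → BIenergy N Ω ρ₂ u₂ ≤ BIenergy N Ω ρ₂ v)
    (hρ : ∀ v, (∀ x ∈ closure Ω, 0 ≤ v x) → ρ₂ v ≤ ρ₁ v)
    (hc : ∀ y ∈ frontier Ω, u₂ y - u₁ y ≤ c)
    (hnull : volume.restrict Ω {x | u₂ x - u₁ x = c} = 0) :
    ∀ x ∈ Ω, u₂ x ≤ u₁ x + c := by
  set v := fun y => min (u₂ y - c) (u₁ y) + c
  have hv : Admissible N Ω φ₂ v := h₂.min_sub_const_add h₁ hc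
  have hu₂Ω := h₂.1.mono subset_closure
  have hvΩ := hv.1.mono subset_closure
  have hfd := ae_fderiv_eq_of_average_setIntegral_BIdensity_le_midpoint hΩ hΩμ hu₂Ω hvΩ
    (average_setIntegral_BIdensity_le_midpoint hΩ hΩμ h₁ h₂ hmin₁ hmin₂ hρ hc hnull)
  have hgd : ∀ᵐ x, x ∈ Ω → fderiv ℝ (u₂ - v) x = 0 := by
    filter_upwards [hfd, hu₂Ω.ae_differentiableAt_of_isOpen hΩ,
      hvΩ.ae_differentiableAt_of_isOpen hΩ] with x hx hu₂x hvx hxΩ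
    rw [fderiv_sub (hu₂x hxΩ) (hvx hxΩ), hx hxΩ, sub_self]
  have hg : LipschitzOnWith 2 (u₂ - v) (closure Ω) := by
    have := h₂.1.sub hv.1
    rw [one_add_one_eq_two] at this
    exact this
  intro x hx
  have hconst : EqOn (u₂ - v) (fun _ => (u₂ - v) x) (closure Ω) :=
    EqOn.of_subset_closure (fun y hy => (hg.mono subset_closure).apply_eq_of_ae_fderiv_eq_zero
      hΩ hΩconn hgd hy hx) hg.continuousOn continuousOn_const subset_closure subset_rfl
  obtain ⟨y, hy⟩ := hfr
  have hy0 : (u₂ - v) y = 0 := by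
    simp only [Pi.sub_apply, v, min_eq_left (by linarith [hc y hy] : u₂ y - c ≤ u₁ y)]
    ring
  have hx0 := (hconst (frontier_subset_closure hy)).symm.trans hy0
  simp only [Pi.sub_apply, v] at hx0
  linarith [min_le_right (u₂ x - c) (u₁ x)]

end Comparison

theorem BI_comparison (N : ℕ) (hN : 3 ≤ N)
    (Ω : Set (EuclideanSpace ℝ (Fin N))) (hΩopen : IsOpen Ω)
    (hΩconn : IsConnected Ω) (hΩbdd : Bornology.IsBounded Ω)
    (φ₁ φ₂ : EuclideanSpace ℝ (Fin N) → ℝ)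
    (hφ₁ : ∃ M, ∀ x ∈ frontier Ω, |φ₁ x| ≤ M)
    (hφ₂ : ∃ M, ∀ x ∈ frontier Ω, |φ₂ x| ≤ M)
    (ρ₁ ρ₂ : (EuclideanSpace ℝ (Fin N) → ℝ) →ₗ[ℝ] ℝ)
    (hρ : ∀ v : EuclideanSpace ℝ (Fin N) → ℝ, (∀ x ∈ closure Ω, 0 ≤ v x) → ρ₂ v ≤ ρ₁ v)
    (u₁ u₂ : EuclideanSpace ℝ (Fin N) → ℝ)
    (h₁ : Admissible N Ω φ₁ u₁) (h₂ : Admissible N Ω φ₂ u₂)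
    (hmin₁ : ∀ v, Admissible N Ω φ₁ v → BIenergy N Ω ρ₁ u₁ ≤ BIenergy N Ω ρ₁ v)
    (hmin₂ : ∀ v, Admissible N Ω φ₂ v → BIenergy N Ω ρ₂ u₂ ≤ BIenergy N Ω ρ₂ v) :
    ∀ x ∈ Ω, u₂ x ≤ u₁ x + sSup ((fun y => φ₂ y - φ₁ y) '' frontier Ω) := by
  intro x hx
  have : Nonempty (Fin N) := ⟨⟨0, by omega⟩⟩
  have hfr : (frontier Ω).Nonempty := nonempty_frontier_iff.2
    ⟨hΩconn.nonempty, fun h => NormedSpace.unbounded_univ ℝ _ (h ▸ hΩbdd)⟩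
  obtain ⟨M₁, hM₁⟩ := hφ₁
  obtain ⟨M₂, hM₂⟩ := hφ₂
  have hbdd : BddAbove ((fun y => φ₂ y - φ₁ y) '' frontier Ω) := by
    refine ⟨M₂ + M₁, ?_⟩
    rintro _ ⟨y, hy, rfl⟩
    linarith [(abs_le.1 (hM₁ y hy)).1, (abs_le.1 (hM₂ y hy)).2]
  have hc : ∀ y ∈ frontier Ω, u₂ y - u₁ y ≤ sSup ((fun y => φ₂ y - φ₁ y) '' frontier Ω) :=
    fun y hy => by rw [h₁.2 hy, h₂.2 hy]; exact le_csSup hbdd ⟨y, hy, rfl⟩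
  have hmeas : NullMeasurable (fun y => u₂ y - u₁ y) (volume.restrict Ω) :=
    ((h₂.1.continuousOn.sub h₁.1.continuousOn).mono subset_closure).aemeasurable
      hΩopen.measurableSet |>.nullMeasurable
  refine le_of_forall_pos_lt_add fun ε hε => ?_
  obtain ⟨c, ⟨hcl, hcr⟩, hnull⟩ := exists_mem_Ioo_measure_level_set_eq_zero hmeas
    (lt_add_of_pos_right (sSup ((fun y => φ₂ y - φ₁ y) '' frontier Ω)) hε)
  have := le_add_of_frontier_sub_le hΩopen hΩconn.isPreconnected
    (hΩbdd.measure_lt_top (μ := volume)).ne hfr h₁ h₂ hmin₁ hmin₂ hρ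
    (fun y hy => (hc y hy).trans hcl.le) hnull x hx
  linarith
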